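/- Fix n ≥ 1, ε ∈ ℝ, A, B, C > 0, reals D₁, …, D_n and d₁, …, d_n, and set 𝕀 = diag(A, B, C). Let Ω, Γ₁, …, Γ_n : ℝ → ℝ³ be differentiable curves with |Γ_i(t)| = 1 for all i, t, and define M(t) = 𝕀Ω(t) + Σ_{i=1}^n D_i (Ω(t) − ⟨Γ_i(t), Ω(t)⟩ Γ_i(t)) and N(t) = Σ_{i=1}^n d_i Γ_i(t). If the curves satisfy the reduced equations Ṁ(t) = M(t) × Ω(t) + (1 − ε) N(t) × Ω(t) and Γ̇_i(t) = ε Γ_i(t) × Ω(t), then the energy F₁ = ½ ⟨M(t), Ω(t)⟩ is constant in t. -/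

import Mathlib

/-!
The derivative of `E = ⟨M, Ω⟩` is computed in two ways. Since `Ṁ` is a combination of cross
products with `Ω`, it is orthogonal to `Ω`, so `Ė = ⟨M, Ω̇⟩`. On the other hand `E = ⟨𝐈Ω, Ω⟩` is
a quadratic form in `Ω` for a symmetric operator `𝐈` that depends on the `Γᵢ` only through
`⟨Γᵢ, Ω⟩²`; since `Γ̇ᵢ ⊥ Ω` this dependence does not contribute, and `Ė = 2⟨M, Ω̇⟩`.
Hence `Ė = 0`.
-/

open Matrix

section Derivatives

variable {κ : Type*} [Fintype κ] {u v : ℝ → κ → ℝ} {u' v' : κ → ℝ} {t : ℝ}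

theorem HasDerivAt.dotProduct (hu : HasDerivAt u u' t) (hv : HasDerivAt v v' t) :
    HasDerivAt (fun s => u s ⬝ᵥ v s) (u' ⬝ᵥ v t + u t ⬝ᵥ v') t := by
  simp only [_root_.dotProduct, ← Finset.sum_add_distrib]
  exact HasDerivAt.fun_sum fun j _ => (hasDerivAt_pi.mp hu j).fun_mul (hasDerivAt_pi.mp hv j)

theorem HasDerivAt.mulVec {m : Type*} (A : Matrix m κ ℝ) (hu : HasDerivAt u u' t) :
    HasDerivAt (fun s => A *ᵥ u s) (A *ᵥ u') t := by
  refine hasDerivAt_pi.mpr fun j => ?_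
  have h := (hasDerivAt_const t (A j)).dotProduct hu
  rw [zero_dotProduct, zero_add] at h
  exact h

theorem HasDerivAt.dotProduct_self (hu : HasDerivAt u u' t) :
    HasDerivAt (fun s => u s ⬝ᵥ u s) (2 * (u t ⬝ᵥ u')) t := by
  convert hu.dotProduct hu using 1
  rw [dotProduct_comm u']; ring

theorem Matrix.IsSymm.mulVec_dotProduct_comm {A : Matrix κ κ ℝ} (hA : A.IsSymm) (x y : κ → ℝ) :
    A *ᵥ x ⬝ᵥ y = A *ᵥ y ⬝ᵥ x := by
  rw [dotProduct_comm, dotProduct_mulVec, ← mulVec_transpose, hA.eq]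

theorem Matrix.IsSymm.hasDerivAt_mulVec_dotProduct_self {A : Matrix κ κ ℝ} (hA : A.IsSymm)
    (hu : HasDerivAt u u' t) :
    HasDerivAt (fun s => A *ᵥ u s ⬝ᵥ u s) (2 * (A *ᵥ u t ⬝ᵥ u')) t := by
  convert (hu.mulVec A).dotProduct hu using 1
  rw [hA.mulVec_dotProduct_comm u']; ring

end Derivatives

theorem cross_dot_self_right {R : Type*} [CommRing R] (v w : Fin 3 → R) : v ⨯₃ w ⬝ᵥ w = 0 := by
  rw [dotProduct_comm, dot_cross_self]

section BallBearing

variable {ι κ : Type*} [Fintype ι] [Fintype κ]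

/-- `M = 𝐈Ω` with `𝐈 = I + Σᵢ Dᵢ prᵢ`; the formula `prᵢ Ω = Ω - ⟨Γᵢ, Ω⟩ Γᵢ` is the projection
onto `Γᵢ^⊥` only for unit vectors `Γᵢ`. -/
def ballBearingMomentum (I : Matrix κ κ ℝ) (D : ι → ℝ) (Γ : ι → κ → ℝ) (Ω : κ → ℝ) : κ → ℝ :=
  I *ᵥ Ω + ∑ i, D i • (Ω - (Γ i ⬝ᵥ Ω) • Γ i)

variable {Ω Γ : ℝ → κ → ℝ} {Ω' Γ' : κ → ℝ} {t : ℝ}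

theorem hasDerivAt_rejection_dotProduct (hΩ : HasDerivAt Ω Ω' t) (hΓ : HasDerivAt Γ Γ' t)
    (horth : Γ' ⬝ᵥ Ω t = 0) :
    HasDerivAt (fun s => (Ω s - (Γ s ⬝ᵥ Ω s) • Γ s) ⬝ᵥ Ω s)
      (2 * ((Ω t - (Γ t ⬝ᵥ Ω t) • Γ t) ⬝ᵥ Ω')) t := by
  have hΓΩ : HasDerivAt (fun s => Γ s ⬝ᵥ Ω s) (Γ t ⬝ᵥ Ω') t := by
    simpa only [horth, zero_add] using hΓ.dotProduct hΩ
  have hform : (fun s => (Ω s - (Γ s ⬝ᵥ Ω s) • Γ s) ⬝ᵥ Ω s)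
      = fun s => Ω s ⬝ᵥ Ω s - (Γ s ⬝ᵥ Ω s) ^ 2 := by
    ext s; rw [sub_dotProduct, smul_dotProduct, smul_eq_mul, sq]
  rw [hform]
  refine (hΩ.dotProduct_self.fun_sub (hΓΩ.fun_pow 2)).congr_deriv ?_
  rw [sub_dotProduct, smul_dotProduct, smul_eq_mul]
  push_cast
  ring

theorem hasDerivAt_ballBearingMomentum_dotProduct {I : Matrix κ κ ℝ} (hI : I.IsSymm) (D : ι → ℝ)
    {Γ : ι → ℝ → κ → ℝ} {Γ' : ι → κ → ℝ} (hΩ : HasDerivAt Ω Ω' t)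
    (hΓ : ∀ i, HasDerivAt (Γ i) (Γ' i) t) (horth : ∀ i, Γ' i ⬝ᵥ Ω t = 0) :
    HasDerivAt (fun s => ballBearingMomentum I D (fun i => Γ i s) (Ω s) ⬝ᵥ Ω s)
      (2 * (ballBearingMomentum I D (fun i => Γ i t) (Ω t) ⬝ᵥ Ω')) t := by
  simp only [ballBearingMomentum, add_dotProduct, sum_dotProduct, smul_dotProduct, smul_eq_mul,
    mul_add, Finset.mul_sum, mul_left_comm (2 : ℝ)]
  exact (hI.hasDerivAt_mulVec_dotProduct_self hΩ).add <| HasDerivAt.fun_sum fun i _ =>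
    (hasDerivAt_rejection_dotProduct hΩ (hΓ i) (horth i)).const_mul (D i)

end BallBearing

theorem spherical_ball_bearing_energy_integral_general
    (n : ℕ) (ε A B C : ℝ)
    (D : Fin n → ℝ)
    (Ω Ω' : ℝ → Fin 3 → ℝ) (Γ : Fin n → ℝ → Fin 3 → ℝ)
    (hΩ : ∀ t : ℝ, HasDerivAt Ω (Ω' t) t)
    (M N : ℝ → Fin 3 → ℝ)
    (hM : ∀ t : ℝ, M t = (Matrix.diagonal ![A, B, C]).mulVec (Ω t)
        + ∑ i : Fin n, D i • (Ω t - (Γ i t ⬝ᵥ Ω t) • Γ i t))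
    (hMdot : ∀ t : ℝ, HasDerivAt M (M t ⨯₃ Ω t + (1 - ε) • (N t ⨯₃ Ω t)) t)
    (hΓdot : ∀ (i : Fin n) (t : ℝ), HasDerivAt (Γ i) (ε • (Γ i t ⨯₃ Ω t)) t) :
    ∀ s t : ℝ, (1 / 2) * (M s ⬝ᵥ Ω s) = (1 / 2) * (M t ⬝ᵥ Ω t) := by
  set E := fun s => M s ⬝ᵥ Ω s
  have hE_gyro : ∀ r, HasDerivAt E (M r ⬝ᵥ Ω' r) r := fun r => by
    simpa only [add_dotProduct, smul_dotProduct, cross_dot_self_right, smul_zero, add_zero,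
      zero_add] using (hMdot r).dotProduct (hΩ r)
  have hE_quadratic : ∀ r, HasDerivAt E (2 * (M r ⬝ᵥ Ω' r)) r := fun r => by
    have h := hasDerivAt_ballBearingMomentum_dotProduct (isSymm_diagonal ![A, B, C]) D (hΩ r)
      (fun i => hΓdot i r) fun i => by rw [smul_dotProduct, cross_dot_self_right, smul_zero]
    simpa only [E, hM, ballBearingMomentum] using h
  have hE_const : ∀ r, HasDerivAt E 0 r := fun r => by
    have hdouble := (hE_gyro r).unique (hE_quadratic r)
    simpa only [show M r ⬝ᵥ Ω' r = 0 by linarith] using hE_gyro r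
  intro s t
  exact congrArg (1 / 2 * ·) <| is_const_of_deriv_eq_zero
    (fun r => (hE_const r).differentiableAt) (fun r => (hE_const r).deriv) s t

/-- For the reduced spherical ball bearing system with `n` balls,
`Ṁ = M × Ω + (1 − ε) N × Ω`, `Γ̇ᵢ = ε Γᵢ × Ω`, where
`M = 𝕀Ω + Σᵢ Dᵢ (Ω − ⟨Γᵢ, Ω⟩ Γᵢ)` and `N = Σᵢ dᵢ Γᵢ`, the energy
`F₁ = ½ ⟨M, Ω⟩` is a first integral. -/
theorem spherical_ball_bearing_energy_integral
    (n : ℕ) (hn : 1 ≤ n) (ε A B C : ℝ) (hA : 0 < A) (hB : 0 < B) (hC : 0 < C)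
    (D d : Fin n → ℝ)
    (Ω Ω' : ℝ → Fin 3 → ℝ) (Γ : Fin n → ℝ → Fin 3 → ℝ)
    (hΩ : ∀ t : ℝ, HasDerivAt Ω (Ω' t) t)
    (hunit : ∀ (i : Fin n) (t : ℝ), Γ i t ⬝ᵥ Γ i t = 1)
    (M N : ℝ → Fin 3 → ℝ)
    (hM : ∀ t : ℝ, M t = (Matrix.diagonal ![A, B, C]).mulVec (Ω t)
        + ∑ i : Fin n, D i • (Ω t - (Γ i t ⬝ᵥ Ω t) • Γ i t))
    (hN : ∀ t : ℝ, N t = ∑ i : Fin n, d i • Γ i t)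
    (hMdot : ∀ t : ℝ, HasDerivAt M (M t ⨯₃ Ω t + (1 - ε) • (N t ⨯₃ Ω t)) t)
    (hΓdot : ∀ (i : Fin n) (t : ℝ), HasDerivAt (Γ i) (ε • (Γ i t ⨯₃ Ω t)) t) :
    ∀ s t : ℝ, (1 / 2) * (M s ⬝ᵥ Ω s) = (1 / 2) * (M t ⬝ᵥ Ω t) :=
  spherical_ball_bearing_energy_integral_general n ε A B C D Ω Ω' Γ hΩ M N hM hMdot hΓdot
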